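/- arXiv:1312.2770 — 2 statements merged into one kernel-verified Lean document; each statement's English description precedes it below -/
import Mathlib

section
/- For a Banach lattice E, the lattice operations of E* are weak* sequentially continuous if and only if every almost order bounded subset of E is limited. -/
open Filter Topology Metric Pointwise

/-- The value `|f| x` of the modulus of a continuous linear functional at a positive
element `x`, given by the Riesz–Kantorovich formula `|f| x = sup { f u : |u| ≤ x }`. -/
noncomputable def absFunctional {E : Type*} [NormedAddCommGroup E] [Lattice E] [HasSolidNorm E] [IsOrderedAddMonoid E] [NormedSpace ℝ E]
    (f : E →L[ℝ] ℝ) (x : E) : ℝ :=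
  sSup ((fun u => f u) '' {u : E | |u| ≤ x})

/-- Two functionals `f, g` on a Banach lattice are (lattice) disjoint: `|f| ⊓ |g| = 0`,
expressed via the Riesz–Kantorovich formula for the infimum of the positive functionals
`|f|` and `|g|`. -/
def DualDisjoint {E : Type*} [NormedAddCommGroup E] [Lattice E] [HasSolidNorm E] [IsOrderedAddMonoid E] [NormedSpace ℝ E]
    (f g : E →L[ℝ] ℝ) : Prop :=
  ∀ x : E, 0 ≤ x → ∀ ε : ℝ, 0 < ε →
    ∃ y : E, 0 ≤ y ∧ y ≤ x ∧ absFunctional f y + absFunctional g (x - y) < ε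

/-- A sequence of functionals is disjoint if any two distinct terms are lattice disjoint. -/
def DualDisjointSeq {E : Type*} [NormedAddCommGroup E] [Lattice E] [HasSolidNorm E] [IsOrderedAddMonoid E] [NormedSpace ℝ E]
    (f : ℕ → E →L[ℝ] ℝ) : Prop :=
  ∀ m k, m ≠ k → DualDisjoint (f m) (f k)

/-- A sequence of functionals is weak* null if it converges to `0` pointwise. -/
def WeakStarNull {E : Type*} [NormedAddCommGroup E] [NormedSpace ℝ E]
    (f : ℕ → E →L[ℝ] ℝ) : Prop :=
  ∀ x : E, Tendsto (fun n => f n x) atTop (𝓝 (0 : ℝ))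

/-- The sequence `(|f n|)` of moduli is weak* null (it suffices to test on positive
elements since `|f n|` is additive and every element is a difference of positives). -/
def AbsWeakStarNull {E : Type*} [NormedAddCommGroup E] [Lattice E] [HasSolidNorm E] [IsOrderedAddMonoid E] [NormedSpace ℝ E]
    (f : ℕ → E →L[ℝ] ℝ) : Prop :=
  ∀ x : E, 0 ≤ x → Tendsto (fun n => absFunctional (f n) x) atTop (𝓝 (0 : ℝ))

/-- A functional is positive if it is nonnegative on the positive cone. -/
def PositiveFunctional {E : Type*} [NormedAddCommGroup E] [Lattice E] [HasSolidNorm E] [IsOrderedAddMonoid E] [NormedSpace ℝ E]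
    (f : E →L[ℝ] ℝ) : Prop :=
  ∀ x : E, 0 ≤ x → 0 ≤ f x

/-- A norm bounded set `A` is almost limited if every disjoint weak* null sequence of
functionals converges to `0` uniformly on `A`. -/
def AlmostLimitedSet {E : Type*} [NormedAddCommGroup E] [Lattice E] [HasSolidNorm E] [IsOrderedAddMonoid E] [NormedSpace ℝ E]
    (A : Set E) : Prop :=
  Bornology.IsBounded A ∧
    ∀ f : ℕ → E →L[ℝ] ℝ, DualDisjointSeq f → WeakStarNull f →
      TendstoUniformlyOn (fun n x => f n x) (fun _ => (0 : ℝ)) atTop A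

/-- A norm bounded set `A` in a Banach space is limited if every weak* null sequence of
functionals converges to `0` uniformly on `A`. -/
def LimitedSet {X : Type*} [NormedAddCommGroup X] [NormedSpace ℝ X] (A : Set X) : Prop :=
  Bornology.IsBounded A ∧
    ∀ f : ℕ → X →L[ℝ] ℝ, WeakStarNull f →
      TendstoUniformlyOn (fun n x => f n x) (fun _ => (0 : ℝ)) atTop A

/-- Property (d): for every disjoint weak* null sequence `(f n)`, `(|f n|)` is weak* null. -/
def PropertyD (E : Type*) [NormedAddCommGroup E] [Lattice E] [HasSolidNorm E] [IsOrderedAddMonoid E] [NormedSpace ℝ E] : Prop :=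
  ∀ f : ℕ → E →L[ℝ] ℝ, DualDisjointSeq f → WeakStarNull f → AbsWeakStarNull f

/-- The lattice operations of the dual are weak* sequentially continuous: for every
weak* null sequence `(f n)`, `(|f n|)` is weak* null. -/
def DualLatticeWeakStarSeqCont (E : Type*) [NormedAddCommGroup E] [Lattice E] [HasSolidNorm E] [IsOrderedAddMonoid E]
    [NormedSpace ℝ E] : Prop :=
  ∀ f : ℕ → E →L[ℝ] ℝ, WeakStarNull f → AbsWeakStarNull f

/-- A sequence in a Banach lattice is disjoint if the moduli of distinct terms meet at 0. -/
def LatticeDisjointSeq {E : Type*} [NormedAddCommGroup E] [Lattice E] [HasSolidNorm E] [IsOrderedAddMonoid E] (x : ℕ → E) : Prop :=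
  ∀ m k, m ≠ k → |x m| ⊓ |x k| = 0

/-- A sequence is weakly null if `f (x n) → 0` for every continuous linear functional. -/
def WeaklyNull {E : Type*} [NormedAddCommGroup E] [NormedSpace ℝ E] (x : ℕ → E) : Prop :=
  ∀ f : E →L[ℝ] ℝ, Tendsto (fun n => f (x n)) atTop (𝓝 (0 : ℝ))

/-- A set is solid if `x ∈ A` and `|y| ≤ |x|` imply `y ∈ A`. -/
def IsSolid {E : Type*} [NormedAddCommGroup E] [Lattice E] [HasSolidNorm E] [IsOrderedAddMonoid E] (A : Set E) : Prop :=
  ∀ x ∈ A, ∀ y : E, |y| ≤ |x| → y ∈ A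

/-- The solid hull of a set. -/
def solidHull {E : Type*} [NormedAddCommGroup E] [Lattice E] [HasSolidNorm E] [IsOrderedAddMonoid E] (A : Set E) : Set E :=
  {y | ∃ x ∈ A, |y| ≤ |x|}

/-- A set is almost order bounded if for every `ε > 0` it is contained in
`[-u, u] + ε B_E` for some positive `u`. -/
def AlmostOrderBounded {E : Type*} [NormedAddCommGroup E] [Lattice E] [HasSolidNorm E] [IsOrderedAddMonoid E] (A : Set E) : Prop :=
  ∀ ε : ℝ, 0 < ε → ∃ u : E, 0 ≤ u ∧ A ⊆ Set.Icc (-u) u + Metric.closedBall (0 : E) ε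

/-- σ-Dedekind completeness: every countable nonempty set bounded above has a supremum. -/
def SigmaDedekindComplete (E : Type*) [NormedAddCommGroup E] [Lattice E] [HasSolidNorm E] [IsOrderedAddMonoid E] : Prop :=
  ∀ s : Set E, s.Countable → s.Nonempty → BddAbove s → ∃ b : E, IsLUB s b

/-- A set is relatively weakly compact if its closure in the weak topology is compact. -/
def RelativelyWeaklyCompact {E : Type*} [NormedAddCommGroup E] [NormedSpace ℝ E]
    (A : Set E) : Prop :=
  IsCompact (closure ((toWeakSpace ℝ E) '' A))

/-- The weak Dunford–Pettis* property: every relatively weakly compact set is almost limited. -/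
def WDPStar (E : Type*) [NormedAddCommGroup E] [Lattice E] [HasSolidNorm E] [IsOrderedAddMonoid E] [NormedSpace ℝ E] : Prop :=
  ∀ A : Set E, RelativelyWeaklyCompact A → AlmostLimitedSet A

/-- The bi-sequence property: for each disjoint weakly null sequence in the positive cone
and each weak* null sequence of positive functionals, `f n (x n) → 0`. -/
def BiSequenceProperty (E : Type*) [NormedAddCommGroup E] [Lattice E] [HasSolidNorm E] [IsOrderedAddMonoid E] [NormedSpace ℝ E] : Prop :=
  ∀ x : ℕ → E, (∀ n, 0 ≤ x n) → LatticeDisjointSeq x → WeaklyNull x →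
    ∀ f : ℕ → E →L[ℝ] ℝ, (∀ n, PositiveFunctional (f n)) → WeakStarNull f →
      Tendsto (fun n => f n (x n)) atTop (𝓝 (0 : ℝ))

/-- The dual Schur property: every disjoint weak* null sequence of functionals is norm null. -/
def DualSchur (E : Type*) [NormedAddCommGroup E] [Lattice E] [HasSolidNorm E] [IsOrderedAddMonoid E] [NormedSpace ℝ E] : Prop :=
  ∀ f : ℕ → E →L[ℝ] ℝ, DualDisjointSeq f → WeakStarNull f →
    Tendsto (fun n => ‖f n‖) atTop (𝓝 (0 : ℝ))

/-- The dual positive Schur property: every weak* null sequence of positive functionals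
is norm null. -/
def DualPositiveSchur (E : Type*) [NormedAddCommGroup E] [Lattice E] [HasSolidNorm E] [IsOrderedAddMonoid E] [NormedSpace ℝ E] : Prop :=
  ∀ f : ℕ → E →L[ℝ] ℝ, (∀ n, PositiveFunctional (f n)) → WeakStarNull f →
    Tendsto (fun n => ‖f n‖) atTop (𝓝 (0 : ℝ))

/-- The norm of a Banach lattice is order continuous: every net decreasing to `0`
converges to `0` in norm. -/
def OrderContinuousNorm (E : Type*) [NormedAddCommGroup E] [Lattice E] [HasSolidNorm E] [IsOrderedAddMonoid E] : Prop :=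
  ∀ {ι : Type*} [Preorder ι] [IsDirected ι (· ≤ ·)] [Nonempty ι] (x : ι → E),
    Antitone x → IsGLB (Set.range x) 0 → Tendsto (fun i => ‖x i‖) atTop (𝓝 (0 : ℝ))

/-- The norm of the dual Banach lattice is order continuous: every net of functionals
decreasing to `0` (in the dual order, i.e., pointwise on the positive cone, with greatest
lower bound `0`) converges to `0` in norm. -/
def DualOrderContinuousNorm (E : Type*) [NormedAddCommGroup E] [Lattice E] [HasSolidNorm E] [IsOrderedAddMonoid E]
    [NormedSpace ℝ E] : Prop :=
  ∀ {ι : Type*} [Preorder ι] [IsDirected ι (· ≤ ·)] [Nonempty ι] (f : ι → E →L[ℝ] ℝ),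
    (∀ i j, i ≤ j → ∀ x : E, 0 ≤ x → f j x ≤ f i x) →
    (∀ i, PositiveFunctional (f i)) →
    (∀ g : E →L[ℝ] ℝ, (∀ i, ∀ x : E, 0 ≤ x → g x ≤ f i x) → ∀ x : E, 0 ≤ x → g x ≤ 0) →
    Tendsto (fun i => ‖f i‖) atTop (𝓝 (0 : ℝ))

/-- A norm bounded set `A` is L-weakly compact if every disjoint sequence in its solid
hull is norm null. -/
def LWeaklyCompactSet {E : Type*} [NormedAddCommGroup E] [Lattice E] [HasSolidNorm E] [IsOrderedAddMonoid E] (A : Set E) : Prop :=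
  Bornology.IsBounded A ∧
    ∀ y : ℕ → E, (∀ n, y n ∈ solidHull A) → LatticeDisjointSeq y →
      Tendsto (fun n => ‖y n‖) atTop (𝓝 (0 : ℝ))

/-- An atom of a Banach lattice. -/
def IsLatticeAtom {E : Type*} [NormedAddCommGroup E] [Lattice E] [HasSolidNorm E] [IsOrderedAddMonoid E] (a : E) : Prop :=
  0 < a ∧ ∀ x y : E, 0 ≤ x → x ≤ a → 0 ≤ y → y ≤ a → x ⊓ y = 0 → x = 0 ∨ y = 0

/-- A Banach lattice is discrete (atomic) if the band generated by its atoms is the whole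
lattice; equivalently, the only element disjoint from all atoms is `0`. -/
def DiscreteBanachLattice (E : Type*) [NormedAddCommGroup E] [Lattice E] [HasSolidNorm E] [IsOrderedAddMonoid E] : Prop :=
  ∀ x : E, (∀ a : E, IsLatticeAtom a → |x| ⊓ a = 0) → x = 0

/-- A linear operator between Banach lattices is order bounded if it maps order intervals
into order intervals. -/
def OrderBoundedOperator {E F : Type*} [NormedAddCommGroup E] [Lattice E] [HasSolidNorm E] [IsOrderedAddMonoid E] [NormedSpace ℝ E]
    [NormedAddCommGroup F] [Lattice F] [HasSolidNorm F] [IsOrderedAddMonoid F] [NormedSpace ℝ F] (T : E →ₗ[ℝ] F) : Prop :=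
  ∀ a b : E, ∃ c d : F, T '' Set.Icc a b ⊆ Set.Icc c d

/-!
A weak* null sequence `(fₙ)` is norm bounded by the uniform boundedness principle, and on
`[-u, u] + δ B_E` one has `|fₙ x| ≤ |fₙ| u + ‖fₙ‖ δ`; so if `|fₙ| u → 0` for every `u ≥ 0`,
`(fₙ)` tends to `0` uniformly on every almost order bounded set. Conversely `[-u, u]` is almost
order bounded and `|fₙ| u` is the supremum of `fₙ` over `[-u, u]`, so uniform convergence on
`[-u, u]` gives `|fₙ| u → 0`.
-/

theorem abs_le_iff_mem_Icc_neg {α : Type*} [Lattice α] [AddCommGroup α] [IsOrderedAddMonoid α]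
    {a b : α} : |a| ≤ b ↔ a ∈ Set.Icc (-b) b := by
  rw [abs_le', neg_le, Set.mem_Icc, and_comm]

theorem WeakStarNull.exists_norm_le {E : Type*} [NormedAddCommGroup E] [NormedSpace ℝ E]
    [CompleteSpace E] {f : ℕ → E →L[ℝ] ℝ}
    (hf : WeakStarNull f) : ∃ M, ∀ n, ‖f n‖ ≤ M :=
  banach_steinhaus fun x =>
    let ⟨C, hC⟩ := (hf x).norm.bddAbove_range
    ⟨C, fun n => hC ⟨n, rfl⟩⟩

section BanachLattice

variable {E : Type*} [NormedAddCommGroup E] [Lattice E] [HasSolidNorm E]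

theorem norm_le_norm_of_abs_le {v u : E} (h : |v| ≤ u) : ‖v‖ ≤ ‖u‖ :=
  norm_le_norm_of_abs_le_abs (h.trans (le_abs_self u))

theorem absFunctional_bddAbove [NormedSpace ℝ E] (f : E →L[ℝ] ℝ) (u : E) :
    BddAbove ((fun v => f v) '' {v : E | |v| ≤ u}) := by
  refine ⟨‖f‖ * ‖u‖, ?_⟩
  rintro _ ⟨v, hv, rfl⟩
  calc f v ≤ ‖f v‖ := le_abs_self _
    _ ≤ ‖f‖ * ‖v‖ := f.le_opNorm v
    _ ≤ ‖f‖ * ‖u‖ := by gcongr; exact norm_le_norm_of_abs_le hv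

variable [IsOrderedAddMonoid E]

theorem AlmostOrderBounded.isBounded {A : Set E} (hA : AlmostOrderBounded A) :
    Bornology.IsBounded A := by
  obtain ⟨u, -, hAu⟩ := hA 1 one_pos
  refine (isBounded_closedBall (x := (0 : E)) (r := ‖u‖ + 1)).subset fun x hx => ?_
  obtain ⟨y, hy, z, hz, rfl⟩ := Set.mem_add.1 (hAu hx)
  rw [mem_closedBall_zero_iff] at hz ⊢
  calc ‖y + z‖ ≤ ‖y‖ + ‖z‖ := norm_add_le y z
    _ ≤ ‖u‖ + 1 := add_le_add (norm_le_norm_of_abs_le (abs_le_iff_mem_Icc_neg.2 hy)) hz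

theorem almostOrderBounded_Icc {u : E} (hu : 0 ≤ u) : AlmostOrderBounded (Set.Icc (-u) u) :=
  fun ε hε => ⟨u, hu, fun y hy => ⟨y, hy, 0, by simpa using hε.le, add_zero y⟩⟩

variable [NormedSpace ℝ E]

theorem absFunctional_nonneg (f : E →L[ℝ] ℝ) {u : E} (hu : 0 ≤ u) : 0 ≤ absFunctional f u :=
  le_csSup (absFunctional_bddAbove f u) ⟨0, by simpa using hu, map_zero f⟩

theorem abs_apply_le_absFunctional (f : E →L[ℝ] ℝ) {u v : E} (hv : |v| ≤ u) :
    |f v| ≤ absFunctional f u := by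
  refine abs_le'.2 ⟨le_csSup (absFunctional_bddAbove f u) ⟨v, hv, rfl⟩, ?_⟩
  rw [← map_neg]
  exact le_csSup (absFunctional_bddAbove f u) ⟨-v, by simpa using hv, rfl⟩

theorem absFunctional_le {f : E →L[ℝ] ℝ} {u : E} {c : ℝ} (hu : 0 ≤ u)
    (h : ∀ v ∈ Set.Icc (-u) u, f v ≤ c) : absFunctional f u ≤ c :=
  csSup_le ⟨0, 0, by simpa using hu, map_zero f⟩ <| by
    rintro _ ⟨v, hv, rfl⟩
    exact h v (abs_le_iff_mem_Icc_neg.1 hv)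

theorem abs_apply_le_absFunctional_add (f : E →L[ℝ] ℝ) {u x : E} {δ : ℝ}
    (hx : x ∈ Set.Icc (-u) u + closedBall (0 : E) δ) :
    |f x| ≤ absFunctional f u + ‖f‖ * δ := by
  obtain ⟨y, hy, z, hz, rfl⟩ := Set.mem_add.1 hx
  rw [map_add]
  calc |f y + f z| ≤ |f y| + ‖f z‖ := abs_add_le _ _
    _ ≤ absFunctional f u + ‖f‖ * δ := by
      gcongr
      · exact abs_apply_le_absFunctional f (abs_le_iff_mem_Icc_neg.2 hy)
      · exact f.le_of_opNorm_le_of_le le_rfl (mem_closedBall_zero_iff.1 hz)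

theorem AbsWeakStarNull.tendstoUniformlyOn {f : ℕ → E →L[ℝ] ℝ} {M : ℝ}
    (hf : AbsWeakStarNull f) (hM : ∀ n, ‖f n‖ ≤ M) {A : Set E} (hA : AlmostOrderBounded A) :
    TendstoUniformlyOn (fun n x => f n x) (fun _ => (0 : ℝ)) atTop A := by
  rw [Metric.tendstoUniformlyOn_iff]
  intro ε hε
  obtain ⟨δ, hδ, hMδ⟩ := exists_pos_mul_lt (half_pos hε) M
  obtain ⟨u, hu, hAu⟩ := hA δ hδ
  filter_upwards [(hf u hu).eventually_lt_const (half_pos hε)] with n hn x hx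
  rw [dist_zero_left]
  calc ‖f n x‖ ≤ absFunctional (f n) u + ‖f n‖ * δ := abs_apply_le_absFunctional_add _ (hAu hx)
    _ ≤ absFunctional (f n) u + M * δ := by gcongr; exact hM n
    _ < ε / 2 + ε / 2 := add_lt_add hn hMδ
    _ = ε := add_halves ε

theorem tendsto_absFunctional_of_tendstoUniformlyOn_Icc {f : ℕ → E →L[ℝ] ℝ} {u : E}
    (hu : 0 ≤ u)
    (hf : TendstoUniformlyOn (fun n x => f n x) (fun _ => (0 : ℝ)) atTop (Set.Icc (-u) u)) :
    Tendsto (fun n => absFunctional (f n) u) atTop (𝓝 0) := by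
  refine nhds_basis_closedBall.tendsto_right_iff.2 fun ε hε => ?_
  filter_upwards [Metric.tendstoUniformlyOn_iff.1 hf ε hε] with n hn
  rw [mem_closedBall_zero_iff, Real.norm_of_nonneg (absFunctional_nonneg _ hu)]
  refine absFunctional_le hu fun v hv => (le_abs_self _).trans ?_
  simpa using (hn v hv).le

end BanachLattice

/-- The lattice operations of `E*` are weak* sequentially continuous iff
every almost order bounded subset of `E` is limited. -/
theorem statement4 {E : Type*} [NormedAddCommGroup E] [Lattice E] [HasSolidNorm E] [IsOrderedAddMonoid E] [NormedSpace ℝ E]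
    [CompleteSpace E] :
    DualLatticeWeakStarSeqCont E ↔ ∀ A : Set E, AlmostOrderBounded A → LimitedSet A := by
  refine ⟨fun h A hA => ⟨hA.isBounded, fun f hf => ?_⟩, fun h f hf u hu => ?_⟩
  · obtain ⟨M, hM⟩ := hf.exists_norm_le
    exact (h f hf).tendstoUniformlyOn hM hA
  · exact tendsto_absFunctional_of_tendstoUniformlyOn_Icc hu
      ((h _ (almostOrderBounded_Icc hu)).2 f hf)
end

section
/- Let E be a Banach lattice that has the property (d). If every almost limited solid subset of E is limited, then the lattice operations of E* are weak* sequentially continuous. -/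
open Filter Topology Metric Pointwise

/-! The order interval `[-x, x]` is solid, and a sequence of functionals tends to `0` uniformly
on it exactly when `|f n| x → 0`. Property (d) therefore makes `[-x, x]` almost limited, the
hypothesis makes it limited, and the same equivalence turns this into `|f n| x → 0` for every
weak* null `(f n)`. -/

namespace absFunctional

variable {E : Type*} [NormedAddCommGroup E] [Lattice E] [HasSolidNorm E] [NormedSpace ℝ E]
  (f : E →L[ℝ] ℝ) {x : E}

theorem bddAbove_image : BddAbove ((fun u => f u) '' {u : E | |u| ≤ x}) := by
  refine ⟨‖f‖ * ‖x‖, ?_⟩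
  rintro _ ⟨u, hu, rfl⟩
  calc f u ≤ ‖f‖ * ‖u‖ := (le_abs_self _).trans (f.le_opNorm u)
    _ ≤ ‖f‖ * ‖x‖ := by
      gcongr
      exact norm_le_norm_of_abs_le_abs ((hu : |u| ≤ x).trans (le_abs_self x))

variable [IsOrderedAddMonoid E]

theorem abs_apply_le {y : E} (hy : |y| ≤ x) : |f y| ≤ absFunctional f x := by
  have hneg : f (-y) ≤ absFunctional f x :=
    le_csSup (bddAbove_image f) ⟨-y, by simpa using hy, rfl⟩
  rw [map_neg] at hneg
  exact abs_le.2 ⟨by linarith, le_csSup (bddAbove_image f) ⟨y, hy, rfl⟩⟩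

theorem nonneg (hx : 0 ≤ x) : 0 ≤ absFunctional f x :=
  (abs_nonneg _).trans (abs_apply_le f (y := 0) (by simpa using hx))

theorem le_iff (hx : 0 ≤ x) {c : ℝ} :
    absFunctional f x ≤ c ↔ ∀ y : E, |y| ≤ x → |f y| ≤ c := by
  refine ⟨fun hc y hy => (abs_apply_le f hy).trans hc, fun hc => ?_⟩
  refine csSup_le ⟨f 0, 0, by simpa using hx, rfl⟩ ?_
  rintro _ ⟨y, hy, rfl⟩
  exact (le_abs_self _).trans (hc y hy)

end absFunctional

section OrderInterval

variable {E : Type*} [NormedAddCommGroup E] [Lattice E] [HasSolidNorm E] [IsOrderedAddMonoid E]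

theorem isSolid_setOf_abs_le (x : E) : IsSolid {y : E | |y| ≤ x} :=
  fun _ hz _ hy => hy.trans hz

theorem isBounded_setOf_abs_le {x : E} (hx : 0 ≤ x) : Bornology.IsBounded {y : E | |y| ≤ x} := by
  refine (Metric.isBounded_iff_subset_closedBall 0).2 ⟨‖x‖, fun y hy => ?_⟩
  rw [Metric.mem_closedBall, dist_zero_right]
  exact norm_le_norm_of_abs_le_abs (by rwa [abs_of_nonneg hx])

variable [NormedSpace ℝ E]

theorem tendstoUniformlyOn_setOf_abs_le_iff {x : E} (hx : 0 ≤ x) (f : ℕ → E →L[ℝ] ℝ) :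
    TendstoUniformlyOn (fun n y => f n y) (fun _ => (0 : ℝ)) atTop {y : E | |y| ≤ x} ↔
      Tendsto (fun n => absFunctional (f n) x) atTop (𝓝 0) := by
  simp only [Metric.tendstoUniformlyOn_iff, Metric.tendsto_atTop, dist_zero_left, dist_zero_right,
    Real.norm_eq_abs, abs_of_nonneg (absFunctional.nonneg _ hx), eventually_atTop]
  refine ⟨fun hf ε hε => ?_, fun hf ε hε => ?_⟩
  · obtain ⟨N, hN⟩ := hf (ε / 2) (half_pos hε)
    exact ⟨N, fun n hn => ((absFunctional.le_iff _ hx).2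
      fun y hy => (hN n hn y hy).le).trans_lt (half_lt_self hε)⟩
  · obtain ⟨N, hN⟩ := hf ε hε
    exact ⟨N, fun n hn y hy => (absFunctional.abs_apply_le _ hy).trans_lt (hN n hn)⟩

theorem almostLimitedSet_setOf_abs_le (hd : PropertyD E) {x : E} (hx : 0 ≤ x) :
    AlmostLimitedSet {y : E | |y| ≤ x} :=
  ⟨isBounded_setOf_abs_le hx, fun f hdisj hnull =>
    (tendstoUniformlyOn_setOf_abs_le_iff hx f).2 (hd f hdisj hnull x hx)⟩

end OrderInterval

theorem statement8_general {E : Type*} [NormedAddCommGroup E] [Lattice E] [HasSolidNorm E] [IsOrderedAddMonoid E] [NormedSpace ℝ E]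
    (hd : PropertyD E)
    (h : ∀ A : Set E, IsSolid A → AlmostLimitedSet A → LimitedSet A) :
    DualLatticeWeakStarSeqCont E := by
  intro f hf x hx
  have hlimited : LimitedSet {y : E | |y| ≤ x} :=
    h _ (isSolid_setOf_abs_le x) (almostLimitedSet_setOf_abs_le hd hx)
  exact (tendstoUniformlyOn_setOf_abs_le_iff hx f).1 (hlimited.2 f hf)

/-- If `E` has property (d) and every almost limited solid subset of `E` is
limited, then the lattice operations of `E*` are weak* sequentially continuous. -/
theorem statement8 {E : Type*} [NormedAddCommGroup E] [Lattice E] [HasSolidNorm E] [IsOrderedAddMonoid E] [NormedSpace ℝ E]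
    [CompleteSpace E] (hd : PropertyD E)
    (h : ∀ A : Set E, IsSolid A → AlmostLimitedSet A → LimitedSet A) :
    DualLatticeWeakStarSeqCont E :=
  statement8_general hd h
end
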